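/- arXiv:1311.5446 — 3 statements merged into one kernel-verified Lean document; each statement's English description precedes it below -/
import Mathlib

section
/- Let w : ℝ^N × ℝ^N → ℝ satisfy: (a) for every x, y ↦ w(x,y) ∈ L¹(ℝ^N) with sup_x ‖w(x,·)‖_{L¹} ≤ C_w; (b) there exists a non-negative ρ_w ∈ L¹(ℝ^N) ∩ L^∞(ℝ^N) and Λ_w > 0 with ∫ |w(x,y)| ρ_w(x) dx ≤ Λ_w ρ_w(y) for all y. Let G : ℝ → ℝ be Lipschitz with constant C_G. Then F(h)(x) = ∫ w(x,y) G(h(y)) dy defines a Lipschitz map from L²(ℝ^N, ρ_w) to itself with Lipschitz constant at most C_G (Λ_w C_w)^{1/2}. -/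
/-!
For fixed `x`, the Lipschitz bound on `G` and the Cauchy–Schwarz inequality for the measure
`|w(x,y)| dy` give `|F(g)(x) - F(h)(x)|² ≤ C_G² C_w ∫ |w(x,y)| |g(y) - h(y)|² dy`. Integrating
against `ρ_w(x) dx` and exchanging the order of integration, (C1') bounds the inner integral
`∫ |w(x,y)| ρ_w(x) dx` by `Λ_w ρ_w(y)`: a Schur test. The estimates are carried out for lower
Lebesgue integrals, which need no integrability. (C1') is a statement about Bochner integrals and
so says nothing where `x ↦ |w(x,y)| ρ_w(x)` fails to be integrable; by Tonelli and (C2') this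
happens only for a null set of `y`.
-/

open MeasureTheory Function
open scoped ENNReal NNReal

variable {α β : Type*} [MeasurableSpace α] [MeasurableSpace β] {μ : Measure α} {ν : Measure β}

theorem enorm_integral_sub_integral_le {E : Type*} [NormedAddCommGroup E] [NormedSpace ℝ E]
    {f g : α → E} (hf : AEStronglyMeasurable f μ) (hg : AEStronglyMeasurable g μ) :
    ‖∫ x, f x ∂μ - ∫ x, g x ∂μ‖ₑ ≤ ∫⁻ x, ‖f x - g x‖ₑ ∂μ := by
  by_cases hfg : Integrable (fun x => f x - g x) μ
  · by_cases hfi : Integrable f μ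
    · rw [← integral_sub hfi ((hfi.sub hfg).congr (.of_forall fun x => sub_sub_cancel _ _))]
      exact enorm_integral_le_lintegral_enorm _
    · have hgi : ¬ Integrable g μ := fun hgi =>
        hfi ((hfg.add hgi).congr (.of_forall fun x => sub_add_cancel _ _))
      simp [integral_undef hfi, integral_undef hgi]
  · have htop : ∫⁻ x, ‖f x - g x‖ₑ ∂μ = ∞ := not_lt_top_iff.mp fun h => hfg ⟨hf.sub hg, h⟩
    exact htop ▸ le_top

theorem enorm_integral_mul_comp_sub_le {G : ℝ → ℝ} {K : ℝ≥0} (hG : LipschitzWith K G)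
    {φ u v : α → ℝ} (hφ : AEStronglyMeasurable φ μ) (hu : AEStronglyMeasurable u μ)
    (hv : AEStronglyMeasurable v μ) :
    ‖∫ x, φ x * G (u x) ∂μ - ∫ x, φ x * G (v x) ∂μ‖ₑ ≤ K * ∫⁻ x, ‖φ x‖ₑ * ‖u x - v x‖ₑ ∂μ := by
  refine (enorm_integral_sub_integral_le (hφ.mul (hG.continuous.comp_aestronglyMeasurable hu))
    (hφ.mul (hG.continuous.comp_aestronglyMeasurable hv))).trans ?_
  rw [← lintegral_const_mul' _ _ ENNReal.coe_ne_top]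
  refine lintegral_mono fun x => ?_
  rw [Pi.mul_apply, Pi.mul_apply, ← mul_sub, enorm_mul, mul_left_comm]
  gcongr
  simpa only [edist_eq_enorm_sub] using hG.edist_le_mul (u x) (v x)

theorem ENNReal.lintegral_mul_sq_le {a b : α → ℝ≥0∞} (ha : AEMeasurable a μ)
    (hb : AEMeasurable b μ) :
    (∫⁻ x, a x * b x ∂μ) ^ 2 ≤ (∫⁻ x, a x ∂μ) * ∫⁻ x, a x * b x ^ 2 ∂μ := by
  set p : ℝ := ((2 : ℕ) : ℝ)⁻¹
  have hp : p + p = 1 := by norm_num [p]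
  have hsplit : ∀ x, a x ^ p * (a x * b x ^ 2) ^ p = a x * b x := fun x => by
    rw [ENNReal.mul_rpow_of_nonneg _ _ (by positivity), ENNReal.pow_rpow_inv_natCast two_ne_zero,
      ← mul_assoc, ← ENNReal.rpow_add_of_nonneg _ _ (by positivity) (by positivity), hp,
      ENNReal.rpow_one]
  have holder := ENNReal.lintegral_mul_norm_pow_le (g := fun x => a x * b x ^ 2) ha (by fun_prop)
    (by positivity) (by positivity) hp
  rw [lintegral_congr hsplit] at holder
  calc (∫⁻ x, a x * b x ∂μ) ^ 2
      ≤ ((∫⁻ x, a x ∂μ) ^ p * (∫⁻ x, a x * b x ^ 2 ∂μ) ^ p) ^ 2 := by gcongr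
    _ = (∫⁻ x, a x ∂μ) * ∫⁻ x, a x * b x ^ 2 ∂μ := by
        rw [mul_pow, ENNReal.rpow_inv_natCast_pow two_ne_zero,
          ENNReal.rpow_inv_natCast_pow two_ne_zero]

theorem lintegral_sq_lintegral_mul_le [SFinite μ] [SFinite ν] {k : α → β → ℝ≥0∞}
    (hk : Measurable (uncurry k)) {f : β → ℝ≥0∞} (hf : Measurable f) {ρ : α → ℝ≥0∞}
    (hρ : AEMeasurable ρ μ) {σ : β → ℝ≥0∞} (hσ : AEMeasurable σ ν) {C Λ : ℝ≥0∞}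
    (hrow : ∀ x, ∫⁻ y, k x y ∂ν ≤ C) (hcol : ∀ᵐ y ∂ν, ∫⁻ x, k x y * ρ x ∂μ ≤ Λ * σ y) :
    ∫⁻ x, (∫⁻ y, k x y * f y ∂ν) ^ 2 * ρ x ∂μ ≤ C * Λ * ∫⁻ y, f y ^ 2 * σ y ∂ν := by
  have hkf : Measurable fun p : α × β => k p.1 p.2 * f p.2 ^ 2 := by fun_prop
  calc ∫⁻ x, (∫⁻ y, k x y * f y ∂ν) ^ 2 * ρ x ∂μ
      ≤ ∫⁻ x, (C * ∫⁻ y, k x y * f y ^ 2 ∂ν) * ρ x ∂μ := by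
        gcongr with x
        exact (ENNReal.lintegral_mul_sq_le (by fun_prop) hf.aemeasurable).trans
          (mul_le_mul_left (hrow x) _)
    _ = C * ∫⁻ x, ∫⁻ y, k x y * f y ^ 2 * ρ x ∂ν ∂μ := by
        simp_rw [mul_assoc C]
        have hI : AEMeasurable (fun x => (∫⁻ y, k x y * f y ^ 2 ∂ν) * ρ x) μ :=
          hkf.lintegral_prod_right'.aemeasurable.mul hρ
        rw [lintegral_const_mul'' C hI]
        congr 1
        exact lintegral_congr fun x => (lintegral_mul_const'' _ (by fun_prop)).symm
    _ = C * ∫⁻ y, f y ^ 2 * ∫⁻ x, k x y * ρ x ∂μ ∂ν := by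
        rw [lintegral_lintegral_swap (hkf.aemeasurable.mul hρ.comp_fst)]
        congr 1
        refine lintegral_congr fun y => ?_
        have hkρ : AEMeasurable (fun x => k x y * ρ x) μ :=
          (by fun_prop : Measurable (k · y)).aemeasurable.mul hρ
        rw [← lintegral_const_mul'' _ hkρ]
        exact lintegral_congr fun x => by ring
    _ ≤ C * ∫⁻ y, f y ^ 2 * (Λ * σ y) ∂ν := by
        gcongr 1
        exact lintegral_mono_ae (hcol.mono fun y hy => by gcongr)
    _ = C * Λ * ∫⁻ y, f y ^ 2 * σ y ∂ν := by
        have hfσ : AEMeasurable (fun y => f y ^ 2 * σ y) ν := (hf.pow_const 2).aemeasurable.mul hσ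
        rw [mul_assoc, ← lintegral_const_mul'' Λ hfσ]
        congr 1
        exact lintegral_congr fun y => by ring

theorem lintegral_enorm_sq_integral_mul_comp_sub_le [SFinite μ] [SFinite ν] {w : α → β → ℝ}
    (hw : Measurable (uncurry w)) {G : ℝ → ℝ} {K : ℝ≥0} (hG : LipschitzWith K G)
    {u v : β → ℝ} (hu : Measurable u) (hv : Measurable v) {ρ : α → ℝ} {σ : β → ℝ}
    (hρ : AEStronglyMeasurable ρ μ) (hσ : AEStronglyMeasurable σ ν) {C Λ : ℝ≥0∞}
    (hrow : ∀ x, ∫⁻ y, ‖w x y‖ₑ ∂ν ≤ C)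
    (hcol : ∀ᵐ y ∂ν, ∫⁻ x, ‖w x y‖ₑ * ‖ρ x‖ₑ ∂μ ≤ Λ * ‖σ y‖ₑ) :
    ∫⁻ x, ‖(∫ y, w x y * G (u y) ∂ν - ∫ y, w x y * G (v y) ∂ν) ^ 2 * ρ x‖ₑ ∂μ ≤
      K ^ 2 * C * Λ * ∫⁻ y, ‖(u y - v y) ^ 2 * σ y‖ₑ ∂ν := by
  calc ∫⁻ x, ‖(∫ y, w x y * G (u y) ∂ν - ∫ y, w x y * G (v y) ∂ν) ^ 2 * ρ x‖ₑ ∂μ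
      = ∫⁻ x, ‖∫ y, w x y * G (u y) ∂ν - ∫ y, w x y * G (v y) ∂ν‖ₑ ^ 2 * ‖ρ x‖ₑ ∂μ := by
        simp only [enorm_mul, enorm_pow]
    _ ≤ ∫⁻ x, ((K : ℝ≥0∞) * ∫⁻ y, ‖w x y‖ₑ * ‖u y - v y‖ₑ ∂ν) ^ 2 * ‖ρ x‖ₑ ∂μ := by
        gcongr with x
        exact enorm_integral_mul_comp_sub_le hG (by fun_prop) hu.aestronglyMeasurable
          hv.aestronglyMeasurable
    _ = K ^ 2 * ∫⁻ x, (∫⁻ y, ‖w x y‖ₑ * ‖u y - v y‖ₑ ∂ν) ^ 2 * ‖ρ x‖ₑ ∂μ := by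
        simp only [mul_pow, mul_assoc]
        exact lintegral_const_mul' _ _ (by finiteness)
    _ ≤ K ^ 2 * (C * Λ * ∫⁻ y, ‖u y - v y‖ₑ ^ 2 * ‖σ y‖ₑ ∂ν) := by
        gcongr
        exact lintegral_sq_lintegral_mul_le hw.enorm (hu.sub hv).enorm hρ.enorm hσ.enorm hrow hcol
    _ = K ^ 2 * C * Λ * ∫⁻ y, ‖(u y - v y) ^ 2 * σ y‖ₑ ∂ν := by
        simp only [enorm_mul, enorm_pow, mul_assoc]

theorem ae_lintegral_enorm_mul_le [SFinite μ] [SFinite ν] {k : α → β → ℝ}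
    (hk : Measurable (uncurry k)) {ρ : α → ℝ} (hρ : Integrable ρ μ) (hρ0 : ∀ x, 0 ≤ ρ x)
    {C : ℝ≥0∞} (hC : C ≠ ∞) (hrow : ∀ x, ∫⁻ y, ‖k x y‖ₑ ∂ν ≤ C) {Λ : ℝ} {σ : β → ℝ}
    (hcol : ∀ y, ∫ x, |k x y| * ρ x ∂μ ≤ Λ * σ y) :
    ∀ᵐ y ∂ν, ∫⁻ x, ‖k x y‖ₑ * ‖ρ x‖ₑ ∂μ ≤ ENNReal.ofReal (Λ * σ y) := by
  have hkρ : AEMeasurable (uncurry fun x y => ‖k x y‖ₑ * ‖ρ x‖ₑ) (μ.prod ν) :=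
    hk.enorm.aemeasurable.mul hρ.1.enorm.comp_fst
  have hfin : ∫⁻ y, ∫⁻ x, ‖k x y‖ₑ * ‖ρ x‖ₑ ∂μ ∂ν ≠ ∞ := by
    rw [← lintegral_lintegral_swap hkρ]
    refine (lt_of_le_of_lt ?_ (ENNReal.mul_lt_top hC.lt_top hρ.2)).ne
    calc ∫⁻ x, ∫⁻ y, ‖k x y‖ₑ * ‖ρ x‖ₑ ∂ν ∂μ
        = ∫⁻ x, (∫⁻ y, ‖k x y‖ₑ ∂ν) * ‖ρ x‖ₑ ∂μ :=
          lintegral_congr fun x => lintegral_mul_const'' _ (by fun_prop)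
      _ ≤ ∫⁻ x, C * ‖ρ x‖ₑ ∂μ := by gcongr with x; exact hrow x
      _ = C * ∫⁻ x, ‖ρ x‖ₑ ∂μ := lintegral_const_mul' _ _ hC
  filter_upwards [ae_lt_top' hkρ.lintegral_prod_left hfin] with y hy
  have hint : Integrable (fun x => k x y * ρ x) μ :=
    ⟨(by fun_prop : Measurable (k · y)).aestronglyMeasurable.mul hρ.1, by
      simpa only [HasFiniteIntegral, enorm_mul] using hy⟩
  calc ∫⁻ x, ‖k x y‖ₑ * ‖ρ x‖ₑ ∂μ = ENNReal.ofReal (∫ x, ‖k x y * ρ x‖ ∂μ) := by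
        simp only [ofReal_integral_norm_eq_lintegral_enorm hint, enorm_mul]
    _ ≤ ENNReal.ofReal (Λ * σ y) := by
        gcongr
        simpa only [norm_mul, Real.norm_eq_abs, abs_of_nonneg (hρ0 _)] using hcol y

theorem integrable_sub_sq_mul {f g ρ : α → ℝ} (hf : AEStronglyMeasurable f μ)
    (hg : AEStronglyMeasurable g μ) (hρ : AEStronglyMeasurable ρ μ) (hρ0 : ∀ x, 0 ≤ ρ x)
    (hfρ : Integrable (fun x => f x ^ 2 * ρ x) μ) (hgρ : Integrable (fun x => g x ^ 2 * ρ x) μ) :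
    Integrable (fun x => (f x - g x) ^ 2 * ρ x) μ := by
  refine ((hfρ.const_mul 2).add (hgρ.const_mul 2)).mono' (((hf.sub hg).pow 2).mul hρ)
    (.of_forall fun x => ?_)
  rw [Real.norm_of_nonneg (mul_nonneg (sq_nonneg _) (hρ0 x)), Pi.add_apply]
  nlinarith [mul_nonneg (hρ0 x) (sq_nonneg (f x + g x))]

theorem norm_integral_le_of_lintegral_enorm_le {E : Type*} [NormedAddCommGroup E]
    [NormedSpace ℝ E] {F : α → E} {H : β → E} (hH : Integrable H ν) {c : ℝ} (hc : 0 ≤ c)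
    (h : ∫⁻ x, ‖F x‖ₑ ∂μ ≤ ENNReal.ofReal c * ∫⁻ y, ‖H y‖ₑ ∂ν) :
    ‖∫ x, F x ∂μ‖ ≤ c * ∫ y, ‖H y‖ ∂ν := by
  rw [← ENNReal.ofReal_le_ofReal_iff (by positivity), ofReal_norm,
    ENNReal.ofReal_mul hc, ofReal_integral_norm_eq_lintegral_enorm hH]
  exact (enorm_integral_le_lintegral_enorm F).trans h

theorem nonlocal_operator_lipschitz_weighted_L2_general
    {N : ℕ} (w : EuclideanSpace ℝ (Fin N) → EuclideanSpace ℝ (Fin N) → ℝ)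
    (G : ℝ → ℝ) (CG Cw Λw : ℝ) (hCG : 0 ≤ CG) (hΛw : 0 < Λw)
    (ρw : EuclideanSpace ℝ (Fin N) → ℝ)
    (hwmeas : Measurable (Function.uncurry w))
    -- (C2')
    (hC2' : ∀ x, Integrable (fun y => w x y) ∧ (∫ y, |w x y|) ≤ Cw)
    -- (C1')
    (hρpos : ∀ x, 0 ≤ ρw x) (hρint : Integrable ρw)
    (hC1' : ∀ y, (∫ x, |w x y| * ρw x) ≤ Λw * ρw y)
    (hG : ∀ a b : ℝ, |G a - G b| ≤ CG * |a - b|)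
    (g h : EuclideanSpace ℝ (Fin N) → ℝ)
    (hgmeas : Measurable g) (hhmeas : Measurable h)
    (hg : Integrable (fun x => (g x) ^ 2 * ρw x))
    (hh : Integrable (fun x => (h x) ^ 2 * ρw x)) :
    Real.sqrt (∫ x, ((∫ y, w x y * G (g y)) - ∫ y, w x y * G (h y)) ^ 2 * ρw x) ≤
      CG * Real.sqrt (Λw * Cw) * Real.sqrt (∫ x, (g x - h x) ^ 2 * ρw x) := by
  have hCw : 0 ≤ Cw := (integral_nonneg fun y => abs_nonneg _).trans (hC2' 0).2
  have hGlip : LipschitzWith (Real.toNNReal CG) G := .of_dist_le_mul fun a b => by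
    simpa only [Real.dist_eq, Real.coe_toNNReal CG hCG] using hG a b
  have hrow : ∀ x, ∫⁻ y, ‖w x y‖ₑ ≤ ENNReal.ofReal Cw := fun x => by
    rw [← ofReal_integral_norm_eq_lintegral_enorm (hC2' x).1]
    exact ENNReal.ofReal_le_ofReal (hC2' x).2
  have hcol : ∀ᵐ y, ∫⁻ x, ‖w x y‖ₑ * ‖ρw x‖ₑ ≤ ENNReal.ofReal Λw * ‖ρw y‖ₑ := by
    filter_upwards [ae_lintegral_enorm_mul_le hwmeas hρint hρpos ENNReal.ofReal_ne_top hrow hC1']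
      with y hy
    rwa [ENNReal.ofReal_mul hΛw.le, ← Real.enorm_eq_ofReal (hρpos y)] at hy
  have hkey := lintegral_enorm_sq_integral_mul_comp_sub_le hwmeas hGlip hgmeas hhmeas hρint.1
    hρint.1 hrow hcol
  rw [show ((Real.toNNReal CG : ℝ≥0) : ℝ≥0∞) = ENNReal.ofReal CG from rfl,
    ← ENNReal.ofReal_pow hCG, ← ENNReal.ofReal_mul (sq_nonneg CG),
    ← ENNReal.ofReal_mul (by positivity), mul_assoc, mul_comm Cw] at hkey
  have hL2 := norm_integral_le_of_lintegral_enorm_le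
    (integrable_sub_sq_mul hgmeas.aestronglyMeasurable hhmeas.aestronglyMeasurable hρint.1 hρpos
      hg hh) (by positivity) hkey
  have hI : 0 ≤ ∫ x, (g x - h x) ^ 2 * ρw x :=
    integral_nonneg fun x => mul_nonneg (sq_nonneg _) (hρpos x)
  simp only [Real.norm_of_nonneg (mul_nonneg (sq_nonneg _) (hρpos _))] at hL2
  calc Real.sqrt (∫ x, ((∫ y, w x y * G (g y)) - ∫ y, w x y * G (h y)) ^ 2 * ρw x)
      ≤ Real.sqrt (CG ^ 2 * (Λw * Cw) * ∫ x, (g x - h x) ^ 2 * ρw x) :=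
        Real.sqrt_le_sqrt ((Real.le_norm_self _).trans hL2)
    _ = CG * Real.sqrt (Λw * Cw) * Real.sqrt (∫ x, (g x - h x) ^ 2 * ρw x) := by
        rw [Real.sqrt_mul' _ hI, Real.sqrt_mul (sq_nonneg CG), Real.sqrt_sq hCG]

/-- Under conditions (C2') and (C1') on the neural field kernel `w`, and with `G`
`C_G`-Lipschitz, the map `F(h)(x) = ∫ w(x,y) G(h(y)) dy` is Lipschitz on the weighted
space `L²(ℝ^N, ρ_w)` with constant `C_G (Λ_w C_w)^{1/2}`. -/
theorem nonlocal_operator_lipschitz_weighted_L2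
    {N : ℕ} (w : EuclideanSpace ℝ (Fin N) → EuclideanSpace ℝ (Fin N) → ℝ)
    (G : ℝ → ℝ) (CG Cw Λw : ℝ) (hCG : 0 ≤ CG) (hΛw : 0 < Λw)
    (ρw : EuclideanSpace ℝ (Fin N) → ℝ)
    (hwmeas : Measurable (Function.uncurry w))
    -- (C2')
    (hC2' : ∀ x, Integrable (fun y => w x y) ∧ (∫ y, |w x y|) ≤ Cw)
    -- (C1')
    (hρpos : ∀ x, 0 ≤ ρw x) (hρint : Integrable ρw)
    (hρbdd : ∃ C, ∀ x, ρw x ≤ C)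
    (hC1' : ∀ y, (∫ x, |w x y| * ρw x) ≤ Λw * ρw y)
    (hG : ∀ a b : ℝ, |G a - G b| ≤ CG * |a - b|)
    (g h : EuclideanSpace ℝ (Fin N) → ℝ)
    (hgmeas : Measurable g) (hhmeas : Measurable h)
    (hg : Integrable (fun x => (g x) ^ 2 * ρw x))
    (hh : Integrable (fun x => (h x) ^ 2 * ρw x)) :
    Real.sqrt (∫ x, ((∫ y, w x y * G (g y)) - ∫ y, w x y * G (h y)) ^ 2 * ρw x) ≤
      CG * Real.sqrt (Λw * Cw) * Real.sqrt (∫ x, (g x - h x) ^ 2 * ρw x) :=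
  nonlocal_operator_lipschitz_weighted_L2_general w G CG Cw Λw hCG hΛw ρw hwmeas hC2' hρpos hρint
    hC1' hG g h hgmeas hhmeas hg hh
end

section
/- There exists a measurable function w : ℝ × ℝ → ℝ, namely w(x,y) = (1+|x|)^{-1}(1+|y|)^{-1}, such that ∫∫ |w(x,y)|² dx dy < ∞ but the function x ↦ ‖w(x,·)‖_{L¹(ℝ)} is not in L²(ℝ). Consequently, the operator h ↦ (x ↦ ∫ w(x,y) dy) applied to the constant function G ≡ 1 does not produce an element of L²(ℝ). -/
/-!
The kernel factors as `w(x,y) = f x * f y` with `f x = (1 + |x|)⁻¹`. Since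
`f² = (1 + |x|)^(-2)` is integrable on `ℝ` (the exponent exceeds the dimension), so is
`|w|² = f² ⊗ f²` on `ℝ × ℝ`; but `f x ≥ (2x)⁻¹` for `x ≥ 1`, so `f ∉ L¹`, and every row
`w(x,·) = f x • f` has infinite `L¹` norm.
-/

open MeasureTheory ENNReal

lemma integrable_inv_one_add_abs_sq : Integrable fun x : ℝ => ((1 + |x|)⁻¹) ^ 2 := by
  have h := integrable_one_add_norm (E := ℝ) (μ := volume) (r := 2) (by norm_num)
  refine h.congr (Filter.Eventually.of_forall fun x => ?_)
  simp only [Real.norm_eq_abs]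
  rw [Real.rpow_neg (by positivity), inv_pow, Real.rpow_two]

lemma inv_le_two_mul_inv_one_add_abs {x : ℝ} (hx : 1 ≤ x) : x⁻¹ ≤ 2 * (1 + |x|)⁻¹ := by
  rw [abs_of_nonneg (by linarith), ← div_eq_mul_inv, inv_le_comm₀ (by linarith) (by positivity)]
  rw [inv_div, div_le_iff₀ two_pos]
  linarith

lemma not_integrable_inv_one_add_abs : ¬ Integrable fun x : ℝ => (1 + |x|)⁻¹ := by
  intro h
  refine not_integrableOn_Ici_inv (a := (1 : ℝ)) ((h.const_mul 2).integrableOn.mono' ?_ ?_)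
  · exact measurable_inv.aestronglyMeasurable
  · filter_upwards [ae_restrict_mem measurableSet_Ici] with x (hx : 1 ≤ x)
    rw [Real.norm_of_nonneg (inv_nonneg.2 (by linarith))]
    exact inv_le_two_mul_inv_one_add_abs hx

lemma lintegral_ofReal_inv_one_add_abs : ∫⁻ x : ℝ, ENNReal.ofReal (1 + |x|)⁻¹ = ∞ := by
  by_contra h
  exact not_integrable_inv_one_add_abs <| (lintegral_ofReal_ne_top_iff_integrable
    (by fun_prop) (Filter.Eventually.of_forall fun x => by positivity)).1 h

lemma lintegral_ofReal_abs_mul_inv_one_add_abs {c : ℝ} (hc : 0 < c) :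
    ∫⁻ y : ℝ, ENNReal.ofReal |c * (1 + |y|)⁻¹| = ∞ :=
  calc ∫⁻ y : ℝ, ENNReal.ofReal |c * (1 + |y|)⁻¹|
      = ∫⁻ y : ℝ, ENNReal.ofReal c * ENNReal.ofReal (1 + |y|)⁻¹ :=
        lintegral_congr fun y => by rw [abs_of_pos (by positivity), ofReal_mul hc.le]
    _ = ∞ := by
      rw [lintegral_const_mul' _ _ ofReal_ne_top, lintegral_ofReal_inv_one_add_abs,
        mul_top (ofReal_pos.2 hc).ne']

/-- The kernel `w(x,y) = (1+|x|)⁻¹ (1+|y|)⁻¹` is square-integrable on `ℝ × ℝ`, yet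
`x ↦ ‖w(x,·)‖_{L¹(ℝ)}` is not in `L²(ℝ)` (its square has infinite integral); hence the
nonlocal operator applied to `G ≡ 1` does not produce an element of `L²(ℝ)`. -/
theorem C1_does_not_imply_stability_counterexample :
    ∃ w : ℝ → ℝ → ℝ,
      (∀ x y, w x y = (1 + |x|)⁻¹ * (1 + |y|)⁻¹) ∧
      Measurable (Function.uncurry w) ∧
      Integrable (fun p : ℝ × ℝ => |w p.1 p.2| ^ 2) ∧
      ∫⁻ x, (∫⁻ y, ENNReal.ofReal |w x y|) ^ 2 = ⊤ := by
  refine ⟨fun x y => (1 + |x|)⁻¹ * (1 + |y|)⁻¹, fun _ _ => rfl, by fun_prop, ?_, ?_⟩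
  · refine (integrable_inv_one_add_abs_sq.mul_prod integrable_inv_one_add_abs_sq).congr
      (Filter.Eventually.of_forall fun p => ?_)
    simp only [sq_abs, mul_pow]
  · have row_norm_eq_top (x : ℝ) : ∫⁻ y, ENNReal.ofReal |(1 + |x|)⁻¹ * (1 + |y|)⁻¹| = ∞ :=
      lintegral_ofReal_abs_mul_inv_one_add_abs (by positivity)
    simp only [row_norm_eq_top]
    simp
end

section
/- Let w : ℝ^N → ℝ be continuous with w ∈ L¹(ℝ^N) and ∫ |x|^{2N} |w(x)| dx < ∞. Then there exists a non-negative, non-zero function ρ ∈ L¹(ℝ^N) ∩ L^∞(ℝ^N) and a constant Λ_w = ‖w‖_{L¹} + 1 such that ∫_{ℝ^N} |w(x − y)| ρ(x) dx ≤ Λ_w ρ(y) for all y ∈ ℝ^N. -/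
/-!
Take `ρ(x) = (1 + ε‖x‖)^{-2N}`. The weight `(1 + ε‖x‖)^{2N}` is submultiplicative, so
`ρ(x) ≤ (1 + ε‖x - y‖)^{2N} ρ(y)` and hence
`∫ |w(x - y)| ρ(x) dx ≤ ρ(y) ∫ |w(u)| (1 + ε‖u‖)^{2N} du`.
The moment condition dominates the last integrand uniformly in `ε ≤ 1`, so by dominated
convergence the integral tends to `‖w‖₁` as `ε → 0` and is below `‖w‖₁ + 1` for small `ε`.
Since `2N > N`, `ρ` is integrable.
-/

open MeasureTheory Filter Topology

section PolyWeight

variable {E : Type*} [NormedAddCommGroup E]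

def polyWeight (ε : ℝ) (m : ℕ) (x : E) : ℝ := (1 + ε * ‖x‖) ^ m

variable {ε : ℝ} {m : ℕ}

lemma polyWeight_pos (hε : 0 ≤ ε) (x : E) : 0 < polyWeight ε m x := by
  unfold polyWeight; positivity

@[fun_prop]
lemma continuous_polyWeight : Continuous (polyWeight (E := E) ε m) := by
  unfold polyWeight; fun_prop

lemma polyWeight_inv_le_one (hε : 0 ≤ ε) (x : E) : (polyWeight ε m x)⁻¹ ≤ 1 :=
  inv_le_one_of_one_le₀ (one_le_pow₀ (le_add_of_nonneg_right (by positivity)))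

lemma polyWeight_le_mul_sub (hε : 0 ≤ ε) (x y : E) :
    polyWeight ε m y ≤ polyWeight ε m x * polyWeight ε m (x - y) := by
  unfold polyWeight
  rw [← mul_pow]
  refine pow_le_pow_left₀ (by positivity) ?_ m
  have hy : ‖y‖ ≤ ‖x‖ + ‖x - y‖ := by simpa using norm_sub_le x (x - y)
  nlinarith [mul_nonneg (mul_nonneg hε (norm_nonneg x)) (mul_nonneg hε (norm_nonneg (x - y)))]

lemma polyWeight_inv_le_inv_mul_polyWeight_sub (hε : 0 ≤ ε) (x y : E) :
    (polyWeight ε m x)⁻¹ ≤ polyWeight ε m (x - y) * (polyWeight ε m y)⁻¹ := by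
  have hx := polyWeight_pos (m := m) hε x
  have hy := polyWeight_pos (m := m) hε y
  rw [← div_eq_mul_inv, le_div_iff₀ hy, inv_mul_le_iff₀ hx]
  exact polyWeight_le_mul_sub hε x y

lemma polyWeight_le_two_pow (hε₀ : 0 ≤ ε) (hε₁ : ε ≤ 1) (x : E) :
    polyWeight ε m x ≤ 2 ^ m * (1 + ‖x‖ ^ m) := by
  have hbase : 1 + ε * ‖x‖ ≤ 2 * max 1 ‖x‖ := by
    have : ε * ‖x‖ ≤ ‖x‖ := mul_le_of_le_one_left (norm_nonneg x) hε₁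
    linarith [le_max_left 1 ‖x‖, le_max_right 1 ‖x‖]
  calc polyWeight ε m x ≤ (2 * max 1 ‖x‖) ^ m := pow_le_pow_left₀ (by positivity) hbase m
    _ = 2 ^ m * max 1 ‖x‖ ^ m := mul_pow _ _ _
    _ ≤ 2 ^ m * (1 + ‖x‖ ^ m) := by
      gcongr
      rcases le_total ‖x‖ 1 with h | h
      · rw [max_eq_left h, one_pow]; linarith [pow_nonneg (norm_nonneg x) m]
      · rw [max_eq_right h]; linarith

lemma mul_one_add_norm_le_polyWeight (hε₀ : 0 ≤ ε) (hε₁ : ε ≤ 1) (x : E) :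
    (ε * (1 + ‖x‖)) ^ m ≤ polyWeight ε m x :=
  pow_le_pow_left₀ (by positivity) (by nlinarith [norm_nonneg x]) m

lemma norm_abs_mul_polyWeight_le (hε₀ : 0 ≤ ε) (hε₁ : ε ≤ 1) (f : E → ℝ) (x : E) :
    ‖|f x| * polyWeight ε m x‖ ≤ 2 ^ m * (|f x| + ‖x‖ ^ m * |f x|) := by
  rw [Real.norm_of_nonneg (mul_nonneg (abs_nonneg _) (polyWeight_pos hε₀ x).le)]
  calc |f x| * polyWeight ε m x ≤ |f x| * (2 ^ m * (1 + ‖x‖ ^ m)) := by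
        gcongr; exact polyWeight_le_two_pow hε₀ hε₁ x
    _ = 2 ^ m * (|f x| + ‖x‖ ^ m * |f x|) := by ring

variable [MeasurableSpace E] [BorelSpace E] {μ : Measure E} {f : E → ℝ}

lemma integrable_abs_mul_polyWeight (hf : Integrable f μ)
    (hmom : Integrable (fun x => ‖x‖ ^ m * |f x|) μ) (hε₀ : 0 ≤ ε) (hε₁ : ε ≤ 1) :
    Integrable (fun x => |f x| * polyWeight ε m x) μ :=
  ((hf.abs.add hmom).const_mul (2 ^ m)).mono'
    (hf.abs.aestronglyMeasurable.mul continuous_polyWeight.aestronglyMeasurable)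
    (.of_forall (norm_abs_mul_polyWeight_le hε₀ hε₁ f))

lemma tendsto_integral_abs_mul_polyWeight (hf : Integrable f μ)
    (hmom : Integrable (fun x => ‖x‖ ^ m * |f x|) μ) :
    Tendsto (fun ε => ∫ x, |f x| * polyWeight ε m x ∂μ) (𝓝[>] 0) (𝓝 (∫ x, |f x| ∂μ)) := by
  have hsmall : ∀ᶠ ε in 𝓝[>] (0 : ℝ), 0 ≤ ε ∧ ε ≤ 1 :=
    eventually_of_mem (Ioc_mem_nhdsGT zero_lt_one) fun ε hε => ⟨hε.1.le, hε.2⟩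
  refine tendsto_integral_filter_of_dominated_convergence
    (fun x => 2 ^ m * (|f x| + ‖x‖ ^ m * |f x|))
    (hsmall.mono fun ε hε =>
      (integrable_abs_mul_polyWeight hf hmom hε.1 hε.2).aestronglyMeasurable)
    ?_ ((hf.abs.add hmom).const_mul _) (.of_forall fun x => ?_)
  · exact hsmall.mono fun ε hε => .of_forall (norm_abs_mul_polyWeight_le hε.1 hε.2 f)
  · have : Continuous fun ε : ℝ => |f x| * polyWeight ε m x := by unfold polyWeight; fun_prop
    simpa [polyWeight] using this.continuousWithinAt.tendsto (x := 0) (s := Set.Ioi 0)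

lemma exists_integral_abs_mul_polyWeight_lt (hf : Integrable f μ)
    (hmom : Integrable (fun x => ‖x‖ ^ m * |f x|) μ) {c : ℝ} (hc : ∫ x, |f x| ∂μ < c) :
    ∃ ε, 0 < ε ∧ ε ≤ 1 ∧ ∫ x, |f x| * polyWeight ε m x ∂μ < c :=
  (((tendsto_integral_abs_mul_polyWeight hf hmom).eventually (gt_mem_nhds hc)).and
    (Ioc_mem_nhdsGT zero_lt_one)).exists.imp fun _ ⟨hlt, hε⟩ => ⟨hε.1, hε.2, hlt⟩

lemma integral_abs_sub_mul_polyWeight_inv_le [μ.IsAddRightInvariant] (hε : 0 ≤ ε)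
    (hint : Integrable (fun x => |f x| * polyWeight ε m x) μ) (y : E) :
    ∫ x, |f (x - y)| * (polyWeight ε m x)⁻¹ ∂μ ≤
      (∫ x, |f x| * polyWeight ε m x ∂μ) * (polyWeight ε m y)⁻¹ := by
  calc ∫ x, |f (x - y)| * (polyWeight ε m x)⁻¹ ∂μ
      ≤ ∫ x, |f (x - y)| * polyWeight ε m (x - y) * (polyWeight ε m y)⁻¹ ∂μ := by
        refine integral_mono_of_nonneg (.of_forall fun x => ?_)
          ((hint.comp_sub_right y).mul_const _) (.of_forall fun x => ?_)
        · exact mul_nonneg (abs_nonneg _) (inv_nonneg.2 (polyWeight_pos hε x).le)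
        · dsimp only
          rw [mul_assoc]
          exact mul_le_mul_of_nonneg_left (polyWeight_inv_le_inv_mul_polyWeight_sub hε x y)
            (abs_nonneg _)
    _ = (∫ x, |f x| * polyWeight ε m x ∂μ) * (polyWeight ε m y)⁻¹ := by
        rw [integral_mul_const, integral_sub_right_eq_self (fun x => |f x| * polyWeight ε m x) y]

end PolyWeight

section FiniteDimensional

variable {E : Type*} [NormedAddCommGroup E] [NormedSpace ℝ E] [FiniteDimensional ℝ E]
  [MeasurableSpace E] [BorelSpace E] {μ : Measure E} [μ.IsAddHaarMeasure]

lemma integrable_polyWeight_inv {ε : ℝ} {m : ℕ} (hε₀ : 0 < ε) (hε₁ : ε ≤ 1)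
    (hm : Module.finrank ℝ E < m) : Integrable (fun x => (polyWeight ε m x)⁻¹) μ := by
  have hdecay : Integrable (fun x : E => (ε ^ m)⁻¹ * (1 + ‖x‖) ^ (-(m : ℝ))) μ :=
    (integrable_one_add_norm (by exact_mod_cast hm)).const_mul _
  have hcont : Continuous fun x : E => (polyWeight ε m x)⁻¹ :=
    continuous_polyWeight.inv₀ fun x => (polyWeight_pos hε₀.le x).ne'
  refine hdecay.mono' hcont.aestronglyMeasurable (.of_forall fun x => ?_)
  rw [Real.norm_of_nonneg (inv_nonneg.2 (polyWeight_pos hε₀.le x).le),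
    Real.rpow_neg (by positivity), Real.rpow_natCast, ← mul_inv, ← mul_pow]
  exact inv_anti₀ (by positivity) (mul_one_add_norm_le_polyWeight hε₀.le hε₁ x)

end FiniteDimensional

theorem homogeneous_kernel_satisfies_C1'_general
    {N : ℕ} (hN : 0 < N) (w : EuclideanSpace ℝ (Fin N) → ℝ)
    (hwint : Integrable w)
    (hmoment : Integrable (fun x => ‖x‖ ^ (2 * N) * |w x|)) :
    ∃ ρ : EuclideanSpace ℝ (Fin N) → ℝ,
      Integrable ρ ∧ (∃ C, ∀ x, ρ x ≤ C) ∧ (∀ x, 0 ≤ ρ x) ∧ (∃ x, ρ x ≠ 0) ∧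
      ∀ y, (∫ x, |w (x - y)| * ρ x) ≤ ((∫ x, |w x|) + 1) * ρ y := by
  obtain ⟨ε, hε₀, hε₁, hε⟩ := exists_integral_abs_mul_polyWeight_lt hwint hmoment (lt_add_one _)
  have hdim : Module.finrank ℝ (EuclideanSpace ℝ (Fin N)) < 2 * N := by
    rw [finrank_euclideanSpace_fin]; omega
  refine ⟨fun x => (polyWeight ε (2 * N) x)⁻¹, integrable_polyWeight_inv hε₀ hε₁ hdim,
    ⟨1, polyWeight_inv_le_one hε₀.le⟩, fun x => inv_nonneg.2 (polyWeight_pos hε₀.le x).le,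
    ⟨0, by simp [polyWeight]⟩, fun y => ?_⟩
  calc _ ≤ (∫ x, |w x| * polyWeight ε (2 * N) x) * (polyWeight ε (2 * N) y)⁻¹ :=
        integral_abs_sub_mul_polyWeight_inv_le hε₀.le
          (integrable_abs_mul_polyWeight hwint hmoment hε₀.le hε₁) y
    _ ≤ ((∫ x, |w x|) + 1) * (polyWeight ε (2 * N) y)⁻¹ :=
        mul_le_mul_of_nonneg_right hε.le (inv_nonneg.2 (polyWeight_pos hε₀.le y).le)

/-- Example 2 of Section 2.4: if `w : ℝ^N → ℝ` is continuous, integrable and satisfies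
`∫ |x|^{2N} |w(x)| dx < ∞`, then there is a non-negative, non-zero
`ρ ∈ L¹(ℝ^N) ∩ L^∞(ℝ^N)` such that, with `Λ_w = ‖w‖_{L¹} + 1`,
`∫ |w(x−y)| ρ(x) dx ≤ Λ_w ρ(y)` for all `y` (condition (C1') for homogeneous kernels). -/
theorem homogeneous_kernel_satisfies_C1'
    {N : ℕ} (hN : 0 < N) (w : EuclideanSpace ℝ (Fin N) → ℝ)
    (hwcont : Continuous w) (hwint : Integrable w)
    (hmoment : Integrable (fun x => ‖x‖ ^ (2 * N) * |w x|)) :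
    ∃ ρ : EuclideanSpace ℝ (Fin N) → ℝ,
      Integrable ρ ∧ (∃ C, ∀ x, ρ x ≤ C) ∧ (∀ x, 0 ≤ ρ x) ∧ (∃ x, ρ x ≠ 0) ∧
      ∀ y, (∫ x, |w (x - y)| * ρ x) ≤ ((∫ x, |w x|) + 1) * ρ y :=
  homogeneous_kernel_satisfies_C1'_general hN w hwint hmoment
end
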